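/- arXiv:1603.04451 — 2 statements merged into one kernel-verified Lean document; each statement's English description precedes it below -/
import Mathlib

section
/- If a boolean formula in 3-CNF with n clauses is satisfiable, then the associated fan-star graph FS (with hub u, spoke edges e_{ij} = (u, v_{ij}) for i = 1..n, j = 1..3, and path edges (v_{i1},v_{i2}), (v_{i2},v_{i3})) admits a spanning tree T such that for every pair of spoke edges e_{ij}, e_{kl} whose literals are negations of each other, at most one of e_{ij}, e_{kl} lies in T; conversely, the existence of such a spanning tree implies satisfiability. -/
/-- A spanning tree of the multigraph given by `ends : E → Sym2 V`. -/
def IsSpanningTree {V E : Type*} [Fintype V] (ends : E → Sym2 V) (T : Finset E) : Prop :=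
  T.card + 1 = Fintype.card V ∧
    ∀ u v : V, Relation.ReflTransGen (fun a b => ∃ e ∈ T, ends e = s(a, b)) u v

/-- The fan-star graph built from a 3-CNF formula with `n` clauses: hub `none`,
nodes `some (i,j)` for clause `i` and literal position `j`, spoke edges
`Sum.inl (i,j) = (u, v_{ij})` and path edges `Sum.inr (i,k) = (v_{i,k}, v_{i,k+1})`. -/
def fanStarEnds (n : ℕ) : (Fin n × Fin 3) ⊕ (Fin n × Fin 2) → Sym2 (Option (Fin n × Fin 3))
  | Sum.inl p => s(none, some p)
  | Sum.inr (i, k) => s(some (i, k.castSucc), some (i, k.succ))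

/-! A satisfying assignment selects a true literal in every clause; the spokes of the selected
literals together with all path edges form a spanning tree (`3n` edges reaching every vertex from
the hub), and no two of its spokes conflict because all selected literals are true. Conversely,
the only edges leaving the path of a clause are its spokes, so a spanning tree contains a spoke
at every clause; these spokes select pairwise non-complementary literals, and making them true is
a satisfying assignment. -/

section Selection

variable {ι κ α : Type*}

def IsConsistentSelection (lit : ι → κ → α × Bool) (j : ι → κ) : Prop :=
  ∀ i k, (lit i (j i)).1 = (lit k (j k)).1 → (lit i (j i)).2 = (lit k (j k)).2

theorem exists_satisfying_iff_exists_consistentSelection (lit : ι → κ → α × Bool) :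
    (∃ f : α → Bool, ∀ i, ∃ j, f (lit i j).1 = (lit i j).2) ↔
      ∃ j : ι → κ, IsConsistentSelection lit j := by
  classical
  constructor
  · rintro ⟨f, hf⟩
    choose j hj using hf
    exact ⟨j, fun i k hvar => (hj i).symm.trans (hvar ▸ hj k)⟩
  · rintro ⟨j, hj⟩
    refine ⟨fun x => decide (∃ i, lit i (j i) = (x, true)), fun i => ⟨j i, ?_⟩⟩
    cases hsign : (lit i (j i)).2
    · refine decide_eq_false fun ⟨k, hk⟩ => ?_
      simpa [hsign, hk] using hj i k (by rw [hk])
    · exact decide_eq_true ⟨i, Prod.ext rfl hsign⟩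

end Selection

open Relation

section Joins

variable {V E : Type*}

def Joins (ends : E → Sym2 V) (T : Finset E) (a b : V) : Prop :=
  ∃ e ∈ T, ends e = s(a, b)

instance (ends : E → Sym2 V) (T : Finset E) : Std.Symm (Joins ends T) where
  symm _ _ := fun ⟨e, he, h⟩ => ⟨e, he, h.trans Sym2.eq_swap⟩

theorem isSpanningTree_of_reflTransGen [Fintype V] {ends : E → Sym2 V} {T : Finset E} (root : V)
    (hcard : T.card + 1 = Fintype.card V) (hreach : ∀ v, ReflTransGen (Joins ends T) root v) :
    IsSpanningTree ends T :=
  ⟨hcard, fun u v => (Std.Symm.symm _ _ (hreach u)).trans (hreach v)⟩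

end Joins

theorem Relation.ReflTransGen.exists_rel_of_pred_of_not_pred {α : Type*} {r : α → α → Prop}
    {p : α → Prop} {a b : α} (h : ReflTransGen r a b) (ha : p a) (hb : ¬p b) :
    ∃ x y, p x ∧ ¬p y ∧ r x y := by
  induction h with
  | refl => exact absurd ha hb
  | @tail c d _ hcd ih =>
    by_cases hc : p c
    · exact ⟨c, d, hc, hb, hcd⟩
    · exact ih hc

namespace FanStar

variable {n : ℕ} {T : Finset ((Fin n × Fin 3) ⊕ (Fin n × Fin 2))}

theorem reflTransGen_clause (hpath : ∀ q, Sum.inr q ∈ T) (i : Fin n) (a b : Fin 3) :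
    ReflTransGen (Joins (fanStarEnds n) T) (some (i, a)) (some (i, b)) := by
  have from_first :
      ∀ c : Fin 3, ReflTransGen (Joins (fanStarEnds n) T) (some (i, 0)) (some (i, c)) := by
    have h01 : ReflTransGen (Joins (fanStarEnds n) T) (some (i, 0)) (some (i, 1)) :=
      .single ⟨Sum.inr (i, 0), hpath _, rfl⟩
    have h12 : ReflTransGen (Joins (fanStarEnds n) T) (some (i, 1)) (some (i, 2)) :=
      .single ⟨Sum.inr (i, 1), hpath _, rfl⟩
    intro c
    fin_cases c
    exacts [.refl, h01, h01.trans h12]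
  exact (Std.Symm.symm _ _ (from_first a)).trans (from_first b)

theorem reflTransGen_hub (hpath : ∀ q, Sum.inr q ∈ T)
    (hspoke : ∀ i, ∃ j, Sum.inl (i, j) ∈ T) :
    ∀ v, ReflTransGen (Joins (fanStarEnds n) T) none v
  | none => .refl
  | some (i, k) =>
    have ⟨j, hj⟩ := hspoke i
    .head ⟨Sum.inl (i, j), hj, rfl⟩ (reflTransGen_clause hpath i j k)

theorem exists_spoke_mem {i : Fin n} {k : Fin 3}
    (hconn : ReflTransGen (Joins (fanStarEnds n) T) (some (i, k)) none) :
    ∃ j, Sum.inl (i, j) ∈ T := by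
  obtain ⟨_, y, ⟨k, rfl⟩, hy, e, he, hends⟩ :=
    hconn.exists_rel_of_pred_of_not_pred (p := fun v => ∃ k, v = some (i, k)) ⟨k, rfl⟩
      (by simp)
  rcases e with ⟨i', j⟩ | ⟨i', k'⟩
  · simp only [fanStarEnds, Sym2.eq_iff, reduceCtorEq, false_and, false_or] at hends
    obtain ⟨rfl, -⟩ := Prod.ext_iff.1 (Option.some_injective _ hends.2)
    exact ⟨j, he⟩
  · simp only [fanStarEnds, Sym2.eq_iff] at hends
    refine absurd ?_ hy
    rcases hends with ⟨h, rfl⟩ | ⟨rfl, h⟩ <;>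
      obtain ⟨rfl, -⟩ := Prod.ext_iff.1 (Option.some_injective _ h) <;> exact ⟨_, rfl⟩

def spokeTree (j : Fin n → Fin 3) : Finset ((Fin n × Fin 3) ⊕ (Fin n × Fin 2)) :=
  (Finset.univ.image fun i => (i, j i)).disjSum Finset.univ

theorem inl_mem_spokeTree {j : Fin n → Fin 3} {i : Fin n} {k : Fin 3} :
    Sum.inl (i, k) ∈ spokeTree j ↔ k = j i := by
  simp [spokeTree, eq_comm]

theorem isSpanningTree_spokeTree (j : Fin n → Fin 3) :
    IsSpanningTree (fanStarEnds n) (spokeTree j) := by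
  refine isSpanningTree_of_reflTransGen none ?_ (reflTransGen_hub (by simp [spokeTree])
    fun i => ⟨j i, inl_mem_spokeTree.2 rfl⟩)
  rw [spokeTree, Finset.card_disjSum,
    Finset.card_image_of_injective _ fun a b h => congrArg Prod.fst h]
  simp [Fintype.card_option]
  ring

end FanStar

/-- A 3-CNF formula with clauses `(x_{i1} ∨ x_{i2} ∨ x_{i3})`, where the literal `x_{ij}` is
the variable `(lit i j).1` with sign `(lit i j).2`, is satisfiable if and only if the
associated fan-star graph has a spanning tree containing at most one spoke edge from every
pair of spokes whose literals are negations of each other. -/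
theorem threeSat_iff_fanStar_conflict_free_spanning_tree {α : Type*} (n : ℕ)
    (lit : Fin n → Fin 3 → α × Bool) :
    (∃ f : α → Bool, ∀ i : Fin n, ∃ j : Fin 3, f (lit i j).1 = (lit i j).2) ↔
    (∃ T : Finset ((Fin n × Fin 3) ⊕ (Fin n × Fin 2)),
      IsSpanningTree (fanStarEnds n) T ∧
      ∀ i j k l, (lit i j).1 = (lit k l).1 → (lit i j).2 = !(lit k l).2 →
        ¬(Sum.inl (i, j) ∈ T ∧ Sum.inl (k, l) ∈ T)) := by
  rw [exists_satisfying_iff_exists_consistentSelection]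
  constructor
  · rintro ⟨j, hj⟩
    refine ⟨FanStar.spokeTree j, FanStar.isSpanningTree_spokeTree j, ?_⟩
    rintro i _ k _ hvar hsign ⟨hi, hk⟩
    rw [FanStar.inl_mem_spokeTree] at hi hk
    subst hi hk
    simpa [hsign] using hj i k hvar
  · rintro ⟨T, ⟨-, hconn⟩, hfree⟩
    choose j hj using fun i => FanStar.exists_spoke_mem (hconn (some (i, 0)) none)
    refine ⟨j, fun i k hvar => by_contra fun hsign => ?_⟩
    exact hfree i (j i) k (j k) hvar (Bool.eq_not.2 hsign) ⟨hj i, hj k⟩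
end

section
/- In a fan graph F_n (path v_1−...−v_n plus a hub u adjacent to every v_i), the number of spanning trees satisfies τ(F_n) = 3·τ(F_{n-1}) − τ(F_{n-2}) for n ≥ 3, with τ(F_1) = 1 and τ(F_2) = 3. -/
/-- The fan `F_n`: hub `none`, path vertices `some i`; spoke edges `Sum.inl i = (u, v_i)` and
path edges `Sum.inr ⟨i, _⟩ = (v_i, v_{i+1})`. -/
def fanEnds (n : ℕ) :
    (Fin n ⊕ {i : Fin n // (i : ℕ) + 1 < n}) → Sym2 (Option (Fin n))
  | Sum.inl i => s(none, some i)
  | Sum.inr ⟨i, h⟩ => s(some i, some ⟨(i : ℕ) + 1, h⟩)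

/-- The number of spanning trees of the fan `F_n`. -/
noncomputable def tauFan (n : ℕ) : ℕ :=
  Set.ncard {T : Finset (Fin n ⊕ {i : Fin n // (i : ℕ) + 1 < n}) |
    IsSpanningTree (fanEnds n) T}

/-!
Record a subgraph `T` of `F_n` by its spokes and its path edges. The path edges cut the path
into blocks of consecutive vertices, and `T` is a spanning tree exactly when every block carries
exactly one spoke: connectivity says that every block has a spoke, and then `#T = n` says that no
block has two, because there are `n` minus (number of path edges) blocks.

Read from left to right, this condition is recognised by a two-state automaton ("the current
block has no spoke yet" / "has its spoke"). Counting accepted words gives the transfer matrix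
`!![1, 1; 1, 2]` of trace 3 and determinant 1, so by Cayley–Hamilton every count satisfies
`x (m + 2) = 3 x (m + 1) - x m`.
-/

open Finset

namespace FanTree

section Automaton

variable {σ α : Type*}

def run (step : σ → α → σ) (s : σ) {m : ℕ} (w : Fin m → α) : σ :=
  Fin.foldl m (fun s i => step s (w i)) s

theorem run_succ (step : σ → α → σ) (s : σ) {m : ℕ} (w : Fin (m + 1) → α) :
    run step s w = run step (step s (w 0)) (Fin.tail w) :=
  Fin.foldl_succ ..

theorem run_succ_last (step : σ → α → σ) (s : σ) {m : ℕ} (w : Fin (m + 1) → α) :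
    run step s w = step (run step s (Fin.init w)) (w (Fin.last m)) :=
  Fin.foldl_succ_last ..

theorem run_of_forall_step_eq {step : σ → α → σ} {s : σ} (hs : ∀ a, step s a = s)
    {m : ℕ} (w : Fin m → α) : run step s w = s := by
  induction m with
  | zero => rfl
  | succ m ih => rw [run_succ_last, ih, hs]

theorem card_run_succ [Fintype α] [DecidableEq σ] (step : σ → α → σ) (s t : σ) (m : ℕ) :
    Fintype.card {w : Fin (m + 1) → α // run step s w = t} =
      ∑ a, Fintype.card {w : Fin m → α // run step (step s a) w = t} := by
  let e : {w : Fin (m + 1) → α // run step s w = t} ≃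
      Σ a, {w : Fin m → α // run step (step s a) w = t} :=
    (Equiv.subtypeEquiv (Fin.consEquiv fun _ => α).symm fun w => by rw [run_succ]; rfl).trans
      (Equiv.subtypeProdEquivSigmaSubtype fun a w => run step (step s a) w = t)
  rw [Fintype.card_congr e, Fintype.card_sigma]

end Automaton

/-- The state `some b` means that every finished block has exactly one spoke and the current
block has `b` of them. The letter `(joined, spoke)` of a vertex says whether the path edge from
the previous vertex is present and whether the vertex carries a spoke. -/
def fanStep : Option Bool → Bool × Bool → Option Bool
  | none, _ => none
  | some b, (true, s) => if b && s then none else some (b || s)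
  | some b, (false, s) => if b then some s else none

def acceptCount (m : ℕ) (s : Option Bool) : ℕ :=
  Fintype.card {w : Fin m → Bool × Bool // run fanStep s w = some true}

theorem acceptCount_zero (s : Option Bool) : acceptCount 0 s = if s = some true then 1 else 0 := by
  split_ifs with h <;> simp [acceptCount, run, h]

theorem acceptCount_none (m : ℕ) : acceptCount m none = 0 := by
  simp [acceptCount, run_of_forall_step_eq (fun _ => rfl : ∀ a, fanStep none a = none)]

theorem acceptCount_succ (m : ℕ) (s : Option Bool) :
    acceptCount (m + 1) s = ∑ a, acceptCount m (fanStep s a) :=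
  card_run_succ ..

theorem acceptCount_succ_some_false (m : ℕ) :
    acceptCount (m + 1) (some false) = acceptCount m (some false) + acceptCount m (some true) := by
  simp [acceptCount_succ, Fintype.sum_prod_type, fanStep, acceptCount_none, add_comm]

theorem acceptCount_succ_some_true (m : ℕ) :
    acceptCount (m + 1) (some true) =
      acceptCount m (some false) + 2 * acceptCount m (some true) := by
  simp [acceptCount_succ, Fintype.sum_prod_type, fanStep, acceptCount_none]
  ring

section Blocks

-- `pe k` records the path edge between vertices `k` and `k + 1`, `sp i` the spoke at vertex `i`.
variable (pe sp : ℕ → Bool)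

def blockStart : ℕ → ℕ
  | 0 => 0
  | k + 1 => if pe k then blockStart k else k + 1

def blockSpokes (n j : ℕ) : Finset ℕ :=
  {i ∈ range n | sp i = true ∧ blockStart pe i = blockStart pe j}

def OneSpokePerBlock (n : ℕ) : Prop :=
  ∀ j < n, #(blockSpokes pe sp n j) = 1

variable {pe sp}

theorem blockStart_succ_of_true {k : ℕ} (h : pe k = true) :
    blockStart pe (k + 1) = blockStart pe k := by
  simp [blockStart, h]

theorem blockStart_succ_of_false {k : ℕ} (h : pe k = false) :
    blockStart pe (k + 1) = k + 1 := by
  simp [blockStart, h]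

theorem blockStart_le (k : ℕ) : blockStart pe k ≤ k := by
  induction k with
  | zero => rfl
  | succ k ih => cases h : pe k <;> simp [blockStart, h]; omega

theorem blockStart_eq_iff {j k : ℕ} (hjk : j ≤ k) :
    blockStart pe j = blockStart pe k ↔ blockStart pe k ≤ j := by
  refine ⟨fun h => h ▸ blockStart_le j, fun h => ?_⟩
  induction k with
  | zero => rw [Nat.le_zero.mp hjk]
  | succ k ih =>
    rcases hjk.eq_or_lt with rfl | hjk
    · rfl
    cases hpe : pe k
    · rw [blockStart_succ_of_false hpe] at h; omega
    · rw [blockStart_succ_of_true hpe] at h ⊢; exact ih (by omega) h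

theorem blockStart_blockStart (k : ℕ) : blockStart pe (blockStart pe k) = blockStart pe k :=
  (blockStart_eq_iff (blockStart_le k)).mpr le_rfl

theorem card_blockStarts_add_card (n : ℕ) (hpe : ∀ k, pe k = true → k + 1 < n) :
    #{k ∈ range n | blockStart pe k = k} + #{k ∈ range n | pe k = true} = n := by
  have : #{k ∈ range n | pe k = true} = #{k ∈ range n | ¬blockStart pe k = k} := by
    refine card_nbij' (· + 1) (· - 1) ?_ ?_ ?_ ?_
    · intro k hk
      simp only [coe_filter, mem_range, Set.mem_ofPred_eq] at hk ⊢
      have := blockStart_le (pe := pe) k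
      exact ⟨hpe k hk.2, by rw [blockStart_succ_of_true hk.2]; omega⟩
    · rintro (_ | k) hk <;> simp only [coe_filter, mem_range, Set.mem_ofPred_eq] at hk ⊢
      · exact absurd rfl hk.2
      · cases hpe : pe k
        · exact absurd (blockStart_succ_of_false hpe) hk.2
        · exact ⟨by omega, hpe⟩
    · intro k _; simp
    · rintro (_ | k) hk
      · simp [blockStart] at hk
      · simp
  rw [this, card_filter_add_card_filter_not, card_range]

theorem card_spokes_eq_sum (n : ℕ) :
    #{i ∈ range n | sp i = true} =
      ∑ l ∈ {k ∈ range n | blockStart pe k = k}, #(blockSpokes pe sp n l) := by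
  rw [card_eq_sum_card_fiberwise (f := blockStart pe)]
  · refine sum_congr rfl fun l hl => ?_
    rw [mem_filter] at hl
    unfold blockSpokes
    simp only [filter_filter, hl.2]
  · intro i hi
    simp only [coe_filter, mem_range, Set.mem_ofPred_eq] at hi ⊢
    exact ⟨(blockStart_le i).trans_lt hi.1, blockStart_blockStart i⟩

theorem blockSpokes_blockStart (n j : ℕ) :
    blockSpokes pe sp n (blockStart pe j) = blockSpokes pe sp n j := by
  simp only [blockSpokes, blockStart_blockStart]

theorem oneSpokePerBlock_iff {n : ℕ} (hpe : ∀ k, pe k = true → k + 1 < n) :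
    OneSpokePerBlock pe sp n ↔
      #{i ∈ range n | sp i = true} + #{k ∈ range n | pe k = true} = n ∧
        ∀ j < n, (blockSpokes pe sp n j).Nonempty := by
  have hcount : #{i ∈ range n | sp i = true} + #{k ∈ range n | pe k = true} = n ↔
      ∑ l ∈ {k ∈ range n | blockStart pe k = k}, #(blockSpokes pe sp n l) =
        ∑ l ∈ {k ∈ range n | blockStart pe k = k}, 1 := by
    have := card_blockStarts_add_card n hpe
    rw [← card_spokes_eq_sum, ← card_eq_sum_ones]
    constructor <;> intro <;> omega
  rw [hcount]
  set leaders := {k ∈ range n | blockStart pe k = k}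
  have hleaders : ∀ l ∈ leaders, l < n ∧ blockStart pe l = l := by simp [leaders]
  constructor
  · intro h
    refine ⟨sum_congr rfl fun l hl => h l (hleaders l hl).1, fun j hj => ?_⟩
    exact card_pos.mp (by rw [h j hj]; exact one_pos)
  · rintro ⟨hsum, hne⟩ j hj
    have hle : ∀ l ∈ leaders, 1 ≤ #(blockSpokes pe sp n l) :=
      fun l hl => card_pos.mpr (hne l (hleaders l hl).1)
    rw [← blockSpokes_blockStart]
    refine ((sum_eq_sum_iff_of_le hle).mp hsum.symm _ ?_).symm
    simp only [leaders, mem_filter, mem_range, blockStart_blockStart, and_true]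
    exact (blockStart_le j).trans_lt hj

theorem oneSpokePerBlock_succ_iff (k : ℕ) :
    OneSpokePerBlock pe sp (k + 1) ↔
      OneSpokePerBlock pe sp (blockStart pe k) ∧
        #{i ∈ Icc (blockStart pe k) k | sp i = true} = 1 := by
  have hle := blockStart_le (pe := pe) k
  have closed : ∀ j < blockStart pe k,
      blockSpokes pe sp (k + 1) j = blockSpokes pe sp (blockStart pe k) j := by
    intro j hj
    ext i
    simp only [blockSpokes, mem_filter, mem_range]
    constructor
    · rintro ⟨hi, hsi, hij⟩
      refine ⟨not_le.mp fun hki => ?_, hsi, hij⟩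
      rw [(blockStart_eq_iff (by omega)).mpr hki] at hij
      have := blockStart_le (pe := pe) j
      omega
    · rintro ⟨hi, hsi, hij⟩
      exact ⟨by omega, hsi, hij⟩
  have last : ∀ j, blockStart pe k ≤ j → j ≤ k →
      blockSpokes pe sp (k + 1) j = {i ∈ Icc (blockStart pe k) k | sp i = true} := by
    intro j hkj hjk
    ext i
    simp only [blockSpokes, mem_filter, mem_range, mem_Icc, (blockStart_eq_iff hjk).mpr hkj]
    constructor
    · rintro ⟨hi, hsi, hik⟩
      exact ⟨⟨(blockStart_eq_iff (by omega)).mp hik, by omega⟩, hsi⟩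
    · rintro ⟨⟨hki, hik⟩, hsi⟩
      exact ⟨by omega, hsi, (blockStart_eq_iff hik).mpr hki⟩
  constructor
  · intro h
    exact ⟨fun j hj => closed j hj ▸ h j (by omega), last k hle le_rfl ▸ h k (by omega)⟩
  · rintro ⟨hclosed, hlast⟩ j hj
    by_cases hjk : j < blockStart pe k
    · rw [closed j hjk]; exact hclosed j hjk
    · rw [last j (by omega) (by omega)]; exact hlast

variable (pe sp) in
open Classical in
noncomputable def blockState (k : ℕ) : Option Bool :=
  if OneSpokePerBlock pe sp (blockStart pe k) ∧
      #{i ∈ Icc (blockStart pe k) k | sp i = true} ≤ 1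
  then some (#{i ∈ Icc (blockStart pe k) k | sp i = true} = 1) else none

theorem blockState_eq_some_true_iff (k : ℕ) :
    blockState pe sp k = some true ↔ OneSpokePerBlock pe sp (k + 1) := by
  rw [oneSpokePerBlock_succ_iff, blockState]
  split_ifs with h <;> simp only [Option.some.injEq, decide_eq_true_eq, false_iff]
  · exact ⟨fun hc => ⟨h.1, hc⟩, fun hc => hc.2⟩
  · exact fun hc => h ⟨hc.1, hc.2.le⟩

theorem blockState_succ (k : ℕ) :
    blockState pe sp (k + 1) = fanStep (blockState pe sp k) (pe k, sp (k + 1)) := by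
  cases hpe : pe k
  · have hc : #{i ∈ Icc (k + 1) (k + 1) | sp i = true} = (sp (k + 1)).toNat := by
      cases h : sp (k + 1) <;> simp [filter_singleton, h]
    have hstate := blockState_eq_some_true_iff (pe := pe) (sp := sp) k
    rw [blockState, blockStart_succ_of_false hpe, hc]
    rcases h : blockState pe sp k with _ | _ | _ <;> cases sp (k + 1) <;> simp_all [fanStep]
  · have hc : #{i ∈ Icc (blockStart pe k) (k + 1) | sp i = true} =
        #{i ∈ Icc (blockStart pe k) k | sp i = true} + (sp (k + 1)).toNat := by
      rw [card_filter, card_filter, sum_Icc_succ_top (by have := blockStart_le (pe := pe) k; omega)]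
      cases sp (k + 1) <;> simp
    rw [blockState, blockState, blockStart_succ_of_true hpe, hc]
    generalize #{i ∈ Icc (blockStart pe k) k | sp i = true} = c
    by_cases h : OneSpokePerBlock pe sp (blockStart pe k) <;> cases sp (k + 1) <;>
      rcases c with _ | _ | c <;> simp [h, fanStep]

theorem run_eq_blockState (k : ℕ) :
    run fanStep (some (sp 0)) (fun i : Fin k => (pe i, sp (i + 1))) = blockState pe sp k := by
  induction k with
  | zero =>
    cases h : sp 0 <;> simp [run, blockState, blockStart, OneSpokePerBlock, filter_singleton, h]
  | succ k ih => rw [run_succ_last, blockState_succ, ← ih]; rfl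

end Blocks

section Graph

abbrev FanEdge (n : ℕ) : Type := Fin n ⊕ {i : Fin n // (i : ℕ) + 1 < n}

variable {n : ℕ} (T : Finset (FanEdge n))

-- Both are `false` outside the fan, in particular `pathEdge T (n - 1) = false`.
def spoke (k : ℕ) : Bool :=
  if h : k < n then decide (Sum.inl ⟨k, h⟩ ∈ T) else false

def pathEdge (k : ℕ) : Bool :=
  if h : k + 1 < n then decide (Sum.inr ⟨⟨k, by omega⟩, h⟩ ∈ T) else false

def fanAdj (a b : Option (Fin n)) : Prop :=
  ∃ e ∈ T, fanEnds n e = s(a, b)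

variable {T}

theorem spoke_eq_true_iff (i : Fin n) : spoke T i = true ↔ Sum.inl i ∈ T := by
  simp [spoke]

theorem pathEdge_eq_true_iff (e : {i : Fin n // (i : ℕ) + 1 < n}) :
    pathEdge T e.1 = true ↔ Sum.inr e ∈ T := by
  simp [pathEdge, e.2]

theorem lt_of_pathEdge_eq_true {k : ℕ} (h : pathEdge T k = true) : k + 1 < n := by
  by_contra hk
  simp [pathEdge, hk] at h

instance : Std.Symm (fanAdj T) :=
  ⟨fun _ _ ⟨e, he, hab⟩ => ⟨e, he, hab.trans Sym2.eq_swap⟩⟩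

theorem reflTransGen_blockStart (k : ℕ) (hk : k < n) :
    Relation.ReflTransGen (fanAdj T) (some ⟨k, hk⟩)
      (some ⟨blockStart (pathEdge T) k, (blockStart_le k).trans_lt hk⟩) := by
  induction k with
  | zero => rfl
  | succ k ih =>
    cases hpe : pathEdge T k
    · simp only [blockStart_succ_of_false hpe]; rfl
    · have hedge : fanAdj T (some ⟨k + 1, hk⟩) (some ⟨k, by omega⟩) := Std.Symm.symm _ _
        ⟨Sum.inr ⟨⟨k, by omega⟩, hk⟩, (pathEdge_eq_true_iff ⟨_, hk⟩).mp hpe, rfl⟩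
      simp only [blockStart_succ_of_true hpe]
      exact .head hedge (ih (by omega))

theorem reflTransGen_none_of_nonempty {j : ℕ} (hj : j < n)
    (h : (blockSpokes (pathEdge T) (spoke T) n j).Nonempty) :
    Relation.ReflTransGen (fanAdj T) (some ⟨j, hj⟩) none := by
  obtain ⟨i, hi⟩ := h
  simp only [blockSpokes, mem_filter, mem_range] at hi
  obtain ⟨hin, hsi, hij⟩ := hi
  have hspoke : fanAdj T (some ⟨i, hin⟩) none :=
    Std.Symm.symm _ _ ⟨Sum.inl ⟨i, hin⟩, (spoke_eq_true_iff ⟨i, hin⟩).mp hsi, rfl⟩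
  have hi := reflTransGen_blockStart (T := T) i hin
  simp only [hij] at hi
  exact ((reflTransGen_blockStart j hj).trans (Std.Symm.symm _ _ hi)).tail hspoke

theorem nonempty_of_reflTransGen_none {j : ℕ} (hj : j < n)
    (h : Relation.ReflTransGen (fanAdj T) (some ⟨j, hj⟩) none) :
    (blockSpokes (pathEdge T) (spoke T) n j).Nonempty := by
  -- Otherwise the block of `j` is closed under `fanAdj`, yet the hub lies outside it.
  by_contra hempty
  rw [not_nonempty_iff_eq_empty, eq_empty_iff_forall_notMem] at hempty
  let inBlock : Option (Fin n) → Prop := fun v =>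
    ∃ x : Fin n, v = some x ∧ blockStart (pathEdge T) x = blockStart (pathEdge T) j
  have closed : ∀ a b, inBlock a → fanAdj T a b → inBlock b := by
    rintro a b ⟨x, rfl, hx⟩ ⟨(i | ⟨i, hi⟩), he, hab⟩
    · simp only [fanEnds, Sym2.eq_iff, reduceCtorEq, false_and, Option.some.injEq, false_or] at hab
      obtain ⟨rfl, rfl⟩ := hab
      refine absurd ?_ (hempty i)
      simp [blockSpokes, (spoke_eq_true_iff i).mpr he, hx]
    · have hpe := blockStart_succ_of_true ((pathEdge_eq_true_iff ⟨i, hi⟩).mpr he)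
      simp only [fanEnds, Sym2.eq_iff, Option.some.injEq] at hab
      rcases hab with ⟨rfl, rfl⟩ | ⟨rfl, rfl⟩
      · exact ⟨_, rfl, hpe.trans hx⟩
      · exact ⟨_, rfl, hpe.symm.trans hx⟩
  have reach : ∀ v, Relation.ReflTransGen (fanAdj T) (some ⟨j, hj⟩) v → inBlock v := by
    intro v hv
    induction hv with
    | refl => exact ⟨_, rfl, rfl⟩
    | tail _ hbc ih => exact closed _ _ ih hbc
  simpa [inBlock] using reach none h

theorem connected_iff_forall_nonempty :
    (∀ u v, Relation.ReflTransGen (fanAdj T) u v) ↔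
      ∀ j < n, (blockSpokes (pathEdge T) (spoke T) n j).Nonempty := by
  refine ⟨fun h j hj => nonempty_of_reflTransGen_none hj (h _ _), fun h u v => ?_⟩
  have toHub : ∀ u, Relation.ReflTransGen (fanAdj T) u none := by
    rintro (_ | ⟨j, hj⟩)
    · rfl
    · exact reflTransGen_none_of_nonempty hj (h j hj)
  exact (toHub u).trans (Std.Symm.symm _ _ (toHub v))

theorem card_eq_card_spokes_add_card_pathEdges :
    #T = #{i ∈ range n | spoke T i = true} + #{k ∈ range n | pathEdge T k = true} := by
  rw [← card_toLeft_add_card_toRight]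
  congr 1
  · rw [← card_map Fin.valEmbedding]
    refine congrArg card ?_
    ext k
    simp only [mem_filter, mem_range, mem_map, mem_toLeft, Fin.valEmbedding_apply]
    constructor
    · rintro ⟨a, ha, rfl⟩
      exact ⟨a.2, (spoke_eq_true_iff a).mpr ha⟩
    · rintro ⟨hk, hsk⟩
      exact ⟨⟨k, hk⟩, (spoke_eq_true_iff ⟨k, hk⟩).mp hsk, rfl⟩
  · rw [← card_map ⟨fun e => e.1.1, fun a b h => Subtype.ext (Fin.ext h)⟩]
    refine congrArg card ?_
    ext k
    simp only [mem_filter, mem_range, mem_map, mem_toRight]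
    constructor
    · rintro ⟨a, ha, rfl⟩
      exact ⟨a.1.2, (pathEdge_eq_true_iff a).mpr ha⟩
    · rintro ⟨-, hpk⟩
      have hk := lt_of_pathEdge_eq_true hpk
      exact ⟨⟨⟨k, by omega⟩, hk⟩, (pathEdge_eq_true_iff ⟨_, hk⟩).mp hpk, rfl⟩

theorem isSpanningTree_iff_oneSpokePerBlock :
    IsSpanningTree (fanEnds n) T ↔ OneSpokePerBlock (pathEdge T) (spoke T) n := by
  rw [oneSpokePerBlock_iff fun _ => lt_of_pathEdge_eq_true, ← connected_iff_forall_nonempty,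
    ← card_eq_card_spokes_add_card_pathEdges, IsSpanningTree, Fintype.card_option,
    Fintype.card_fin, add_left_inj]
  rfl

end Graph

section Words

variable {m : ℕ}

def wordOf (T : Finset (FanEdge (m + 1))) : Bool × (Fin m → Bool × Bool) :=
  (spoke T 0, fun i => (pathEdge T i, spoke T (i + 1)))

def ofWord (x : Bool × (Fin m → Bool × Bool)) : Finset (FanEdge (m + 1)) :=
  univ.filter fun e =>
    Sum.elim (Fin.cons x.1 fun i => (x.2 i).2) (fun e => (x.2 ⟨e.1, by omega⟩).1) e = true

def wordEquiv : Finset (FanEdge (m + 1)) ≃ Bool × (Fin m → Bool × Bool) where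
  toFun := wordOf
  invFun := ofWord
  left_inv T := by
    ext (i | e)
    · cases i using Fin.cases
      · simp [ofWord, wordOf, spoke]
        exact decide_eq_true_iff
      · simp [ofWord, wordOf, spoke]
        rfl
    · simp [ofWord, wordOf, pathEdge]
  right_inv x := by
    obtain ⟨b, w⟩ := x
    ext i <;> simp [ofWord, wordOf, spoke, pathEdge]
    rfl

theorem isSpanningTree_iff_run_wordOf (T : Finset (FanEdge (m + 1))) :
    IsSpanningTree (fanEnds (m + 1)) T ↔
      run fanStep (some (wordOf T).1) (wordOf T).2 = some true := by
  rw [isSpanningTree_iff_oneSpokePerBlock, ← blockState_eq_some_true_iff, ← run_eq_blockState]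
  rfl

end Words

theorem tauFan_succ (m : ℕ) :
    tauFan (m + 1) = acceptCount m (some false) + acceptCount m (some true) := by
  let e := ((wordEquiv (m := m)).subtypeEquiv isSpanningTree_iff_run_wordOf).trans
    (Equiv.subtypeProdEquivSigmaSubtype fun b w => run fanStep (some b) w = some true)
  rw [tauFan, ← Nat.card_coe_set_eq, Set.coe_ofPred, Nat.card_congr e, Nat.card_sigma]
  simp [acceptCount, Nat.card_eq_fintype_card, add_comm]

end FanTree

/-- The number of spanning trees of the fan satisfies `τ(F_1) = 1`, `τ(F_2) = 3` and
`τ(F_n) = 3·τ(F_{n−1}) − τ(F_{n−2})` for `n ≥ 3`. -/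
theorem tauFan_recurrence :
    tauFan 1 = 1 ∧ tauFan 2 = 3 ∧
    ∀ n : ℕ, 3 ≤ n → (tauFan n : ℤ) = 3 * tauFan (n - 1) - tauFan (n - 2) := by
  open FanTree in
  refine ⟨?_, ?_, fun n hn => ?_⟩
  · simp [tauFan_succ, acceptCount_zero]
  · simp [tauFan_succ, acceptCount_succ_some_false, acceptCount_succ_some_true, acceptCount_zero]
  · obtain ⟨m, rfl⟩ : ∃ m, n = m + 3 := ⟨n - 3, by omega⟩
    simp only [show m + 3 - 1 = m + 2 by omega, show m + 3 - 2 = m + 1 by omega, tauFan_succ,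
      acceptCount_succ_some_false, acceptCount_succ_some_true]
    push_cast
    ring
end
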